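/- Private minimax lower bounds for the Bernoulli model: consider the family (B(θ)^{⊗n})_{θ∈(0,1)} of n-fold products of Bernoulli distributions, the absolute-value metric and the squared loss. (i) If nε ≥ 2, then the minimax risk over ε-DP mechanisms is at least (1/32)·e^{−1/√2}/(nε)², and in particular at least (1/80)/(nε)². (ii) If n√ρ ≥ 2, then the minimax risk over ρ-zCDP mechanisms is at least (1/64)/(n²ρ). -/

import Mathlib

open MeasureTheory ProbabilityTheory Real
open scoped ENNReal NNReal

variable {𝓧 𝓨 : Type*} [MeasurableSpace 𝓧] [MeasurableSpace 𝓨]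

/-- `(ε, δ)`-differential privacy of a Markov kernel on datasets of `n` points. -/
def IsDP [DecidableEq 𝓧] {n : ℕ} (M : Kernel (Fin n → 𝓧) 𝓨) (ε δ : ℝ) : Prop :=
  ∀ x y : Fin n → 𝓧, hammingDist x y ≤ 1 →
    ∀ S : Set 𝓨, MeasurableSet S →
      M x S ≤ ENNReal.ofReal (Real.exp ε) * M y S + ENNReal.ofReal δ

open scoped Classical in
/-- The Renyi divergence of order `a`. -/
noncomputable def renyiDiv {α : Type*} [MeasurableSpace α] (a : ℝ) (P Q : Measure α) : ℝ≥0∞ :=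
  if P ≪ Q ∧ ∫⁻ x, (P.rnDeriv Q x) ^ a ∂Q ≠ ⊤ then
    ENNReal.ofReal ((a - 1)⁻¹ * Real.log (∫⁻ x, (P.rnDeriv Q x) ^ a ∂Q).toReal)
  else ⊤

/-- `ρ`-zero-concentrated differential privacy of a Markov kernel. -/
def IsZCDP [DecidableEq 𝓧] {n : ℕ} (M : Kernel (Fin n → 𝓧) 𝓨) (ρ : ℝ) : Prop :=
  ∀ x y : Fin n → 𝓧, hammingDist x y ≤ 1 → ∀ a : ℝ, 1 < a →
    renyiDiv a (M x) (M y) ≤ ENNReal.ofReal (ρ * a)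

/-- The Bernoulli distribution with parameter `θ`, as a measure on `Bool`. -/
noncomputable def bern (θ : ℝ) : Measure Bool :=
  ENNReal.ofReal θ • Measure.dirac true + ENNReal.ofReal (1 - θ) • Measure.dirac false

/-- The minimax risk over randomized mechanisms `M : {0,1}^n → Θ = (0,1)` satisfying the
privacy condition `C`, for the Bernoulli model `θ ↦ B(θ)^{⊗n}`, the absolute-value metric
and the squared loss. -/
noncomputable def bernPrivMinimax (n : ℕ) (C : Kernel (Fin n → Bool) ℝ → Prop) : ℝ≥0∞ :=
  ⨅ M ∈ {M : Kernel (Fin n → Bool) ℝ | IsMarkovKernel M ∧ C M ∧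
      ∀ x, ∀ᵐ t ∂(M x), t ∈ Set.Ioo (0 : ℝ) 1},
    ⨆ θ ∈ Set.Ioo (0 : ℝ) 1,
      ∫⁻ x, ∫⁻ t, ENNReal.ofReal (|t - θ| ^ 2) ∂(M x)
        ∂(Measure.pi fun _ : Fin n => bern θ)

/-! ### Auxiliary analytic lemmas -/

lemma exp_quad_bound {t : ℝ} (h0 : 0 ≤ t) (h1 : t ≤ 1/4) : Real.exp (2*t) ≤ 1 + 4*t := by
  have h2 : 1 - 2*t ≤ Real.exp (-(2*t)) := by
    have := Real.add_one_le_exp (-(2*t)); linarith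
  have h3 : Real.exp (2*t) * Real.exp (-(2*t)) = 1 := by
    rw [← Real.exp_add]; simp
  nlinarith [Real.exp_pos (2*t), Real.exp_pos (-(2*t)),
    mul_le_mul_of_nonneg_left h2 (Real.exp_pos (2*t)).le,
    mul_nonneg h0 (by linarith : (0:ℝ) ≤ 1 - 4*t)]

lemma poly_aux {D : ℝ} (h0 : 0 ≤ D) (h1 : D ≤ 1) : (1 - D) ≤ (1 - D^2/2)^4 := by
  nlinarith [mul_nonneg h0 (sub_nonneg.mpr h1), sq_nonneg (D - 4/5), sq_nonneg (D^2 - D),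
    sq_nonneg (D^3 - D), mul_nonneg (mul_nonneg h0 h0) (sub_nonneg.mpr h1),
    mul_nonneg (mul_nonneg (mul_nonneg h0 h0) h0) (sub_nonneg.mpr h1),
    sq_nonneg (D^2 - 4/5), sq_nonneg (D^2 + D - 1), sq_nonneg D, sq_nonneg (1-D)]

lemma one_sub_mul_exp_le {D : ℝ} (h0 : 0 ≤ D) (h1 : D ≤ 1) : (1 - D) * Real.exp (2*D^2) ≤ 1 := by
  have hu0 : (0:ℝ) < 1 - D^2/2 := by nlinarith
  have hEu : Real.exp (D^2/2) * (1 - D^2/2) ≤ 1 := by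
    have h2 : 1 - D^2/2 ≤ Real.exp (-(D^2/2)) := by
      have := Real.add_one_le_exp (-(D^2/2)); linarith
    have h3 : Real.exp (D^2/2) * Real.exp (-(D^2/2)) = 1 := by rw [← Real.exp_add]; simp
    nlinarith [Real.exp_pos (D^2/2), mul_le_mul_of_nonneg_left h2 (Real.exp_pos (D^2/2)).le]
  have hexp4 : Real.exp (2*D^2) = (Real.exp (D^2/2))^4 := by
    rw [← Real.exp_nat_mul]; ring_nf
  have hE4 : Real.exp (2*D^2) * (1 - D^2/2)^4 ≤ 1 := by
    rw [hexp4]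
    calc (Real.exp (D^2/2))^4 * (1 - D^2/2)^4 = (Real.exp (D^2/2) * (1 - D^2/2))^4 := by ring
    _ ≤ 1^4 := pow_le_pow_left₀ (by positivity) hEu 4
    _ = 1 := one_pow 4
  have hp := poly_aux h0 h1
  calc (1 - D) * Real.exp (2*D^2) ≤ (1 - D^2/2)^4 * Real.exp (2*D^2) :=
        mul_le_mul_of_nonneg_right hp (Real.exp_pos _).le
  _ ≤ 1 := by linarith [hE4]

lemma key_ineq (a b : ℝ) (ha : 0 ≤ a) (ha1 : a ≤ 1) (hb : 0 ≤ b) (hb1 : b ≤ 1) :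
    b*(1-b)*(Real.exp (2*(a-b)^2) - 1) ≤ (a-b)^2 := by
  rcases le_or_gt ((a-b)^2) (1/4) with hc | hc
  · have he := exp_quad_bound (sq_nonneg (a-b)) hc
    have hv : b*(1-b) ≤ 1/4 := by nlinarith [sq_nonneg (2*b-1)]
    have hv0 : 0 ≤ b*(1-b) := by nlinarith
    have hexp1 : (0:ℝ) ≤ Real.exp (2*(a-b)^2) - 1 := by
      have := Real.one_le_exp (by positivity : (0:ℝ) ≤ 2*(a-b)^2); linarith
    calc b*(1-b)*(Real.exp (2*(a-b)^2) - 1) ≤ (1/4)*(4*(a-b)^2) := by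
          apply mul_le_mul hv (by linarith) hexp1 (by norm_num)
    _ = (a-b)^2 := by ring
  · set D := |a - b| with hD
    have hDd : D^2 = (a-b)^2 := sq_abs _
    have hD0 : 0 ≤ D := abs_nonneg _
    have hD1 : D ≤ 1 := by rw [hD, abs_le]; constructor <;> linarith
    have hDhalf : 1/2 < D := by nlinarith
    have hv : b*(1-b) ≤ D*(1-D) := by
      rcases le_total b a with hba | hab
      · have hDeq : D = a - b := abs_of_nonneg (by linarith)
        nlinarith [mul_nonneg (by linarith : (0:ℝ) ≤ D - b) (by linarith : (0:ℝ) ≤ 1 - D - b)]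
      · have hDeq : D = b - a := by rw [hD, abs_sub_comm]; exact abs_of_nonneg (by linarith)
        nlinarith [mul_nonneg (by linarith : (0:ℝ) ≤ b - D) (by linarith : (0:ℝ) ≤ b + D - 1)]
    have hexp := one_sub_mul_exp_le hD0 hD1
    have hexp1 : (0:ℝ) ≤ Real.exp (2*(a-b)^2) - 1 := by
      have := Real.one_le_exp (by positivity : (0:ℝ) ≤ 2*(a-b)^2); linarith
    have h2 : (1-D)*(Real.exp (2*(a-b)^2) - 1) ≤ D := by
      rw [← hDd] at *; nlinarith
    calc b*(1-b)*(Real.exp (2*(a-b)^2) - 1) ≤ D*(1-D)*(Real.exp (2*(a-b)^2)-1) :=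
          mul_le_mul_of_nonneg_right hv hexp1
    _ = D*((1-D)*(Real.exp (2*(a-b)^2)-1)) := by ring
    _ ≤ D*D := mul_le_mul_of_nonneg_left h2 hD0
    _ = (a-b)^2 := by rw [← hDd]; ring

lemma abs_diff_le_sqrt {a b ρ : ℝ} (hρ : 0 < ρ) (ha : 0 ≤ a) (ha1 : a ≤ 1) (hb : 0 ≤ b)
    (hb1 : b ≤ 1) (h : (a - b)^2 ≤ b*(1-b)*(Real.exp (2*ρ) - 1)) : a - b ≤ Real.sqrt ρ := by
  have hkey := key_ineq a b ha ha1 hb hb1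
  have hsq : (a-b)^2 ≤ ρ := by
    by_contra hcon
    push_neg at hcon
    have hv0 : 0 ≤ b*(1-b) := by nlinarith
    rcases hv0.eq_or_lt with hv | hv
    · rw [← hv] at h; simp at h; nlinarith
    · have hlt : b*(1-b)*(Real.exp (2*ρ) - 1) < b*(1-b)*(Real.exp (2*(a-b)^2) - 1) := by
        apply mul_lt_mul_of_pos_left _ hv
        have := Real.exp_lt_exp.mpr (by linarith : 2*ρ < 2*(a-b)^2)
        linarith
      linarith
  calc a - b ≤ |a - b| := le_abs_self _
  _ = Real.sqrt ((a-b)^2) := (Real.sqrt_sq_eq_abs _).symm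
  _ ≤ Real.sqrt ρ := Real.sqrt_le_sqrt hsq

/-! ### The Bernoulli measure and the coupling -/

lemma bern_prob {θ : ℝ} (h0 : 0 ≤ θ) (h1 : θ ≤ 1) : IsProbabilityMeasure (bern θ) := by
  constructor
  simp only [bern, Measure.add_apply, Measure.smul_apply, smul_eq_mul, measure_univ, mul_one]
  rw [← ENNReal.ofReal_add h0 (by linarith)]
  norm_num

/-- The monotone coupling of `bern θ₀` and `bern θ₁`. -/
noncomputable def cpl (θ₀ θ₁ : ℝ) : Measure (Bool × Bool) :=
  ENNReal.ofReal θ₀ • Measure.dirac (true, true)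
    + ENNReal.ofReal (1 - θ₁) • Measure.dirac (false, false)
    + ENNReal.ofReal (θ₁ - θ₀) • Measure.dirac (false, true)

lemma cpl_prob {θ₀ θ₁ : ℝ} (h0 : 0 ≤ θ₀) (h01 : θ₀ ≤ θ₁) (h1 : θ₁ ≤ 1) :
    IsProbabilityMeasure (cpl θ₀ θ₁) := by
  constructor
  simp only [cpl, Measure.add_apply, Measure.smul_apply, smul_eq_mul, measure_univ, mul_one]
  rw [← ENNReal.ofReal_add h0 (by linarith), ← ENNReal.ofReal_add (by linarith) (by linarith),
    show θ₀ + (1 - θ₁) + (θ₁ - θ₀) = (1:ℝ) by ring]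
  exact ENNReal.ofReal_one

lemma cpl_map_fst {θ₀ θ₁ : ℝ} (h0 : 0 ≤ θ₀) (h01 : θ₀ ≤ θ₁) (h1 : θ₁ ≤ 1) :
    (cpl θ₀ θ₁).map Prod.fst = bern θ₀ := by
  rw [cpl, Measure.map_add _ _ measurable_fst, Measure.map_add _ _ measurable_fst,
      Measure.map_smul, Measure.map_smul, Measure.map_smul,
      Measure.map_dirac' measurable_fst, Measure.map_dirac' measurable_fst,
      Measure.map_dirac' measurable_fst]
  show ENNReal.ofReal θ₀ • Measure.dirac true + ENNReal.ofReal (1 - θ₁) • Measure.dirac false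
      + ENNReal.ofReal (θ₁ - θ₀) • Measure.dirac false = bern θ₀
  rw [bern, add_assoc, ← add_smul, ← ENNReal.ofReal_add (by linarith) (by linarith),
    show (1 - θ₁) + (θ₁ - θ₀) = 1 - θ₀ by ring]

lemma cpl_map_snd {θ₀ θ₁ : ℝ} (h0 : 0 ≤ θ₀) (h01 : θ₀ ≤ θ₁) (h1 : θ₁ ≤ 1) :
    (cpl θ₀ θ₁).map Prod.snd = bern θ₁ := by
  rw [cpl, Measure.map_add _ _ measurable_snd, Measure.map_add _ _ measurable_snd,
      Measure.map_smul, Measure.map_smul, Measure.map_smul,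
      Measure.map_dirac' measurable_snd, Measure.map_dirac' measurable_snd,
      Measure.map_dirac' measurable_snd]
  show ENNReal.ofReal θ₀ • Measure.dirac true + ENNReal.ofReal (1 - θ₁) • Measure.dirac false
      + ENNReal.ofReal (θ₁ - θ₀) • Measure.dirac true = bern θ₁
  rw [bern, add_right_comm, ← add_smul, ← ENNReal.ofReal_add h0 (by linarith),
    show θ₀ + (θ₁ - θ₀) = θ₁ by ring]

lemma cpl_ne {θ₀ θ₁ : ℝ} :
    cpl θ₀ θ₁ {p : Bool × Bool | p.1 ≠ p.2} = ENNReal.ofReal (θ₁ - θ₀) := by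
  simp [cpl, Measure.add_apply, Measure.smul_apply, Measure.dirac_apply, Set.indicator_apply]

/-! ### Group privacy along a path -/

lemma path_bound {n : ℕ} (M : Kernel (Fin n → Bool) ℝ) (T : Set ℝ) (a : ℝ≥0∞)
    (hstep : ∀ x y : Fin n → Bool, hammingDist x y ≤ 1 → M x T ≤ M y T + a) :
    ∀ (d : ℕ) (x y : Fin n → Bool), hammingDist x y = d → M x T ≤ M y T + d * a := by
  intro d
  induction d with
  | zero =>
    intro x y h
    rw [hammingDist_eq_zero] at h
    subst h; simp
  | succ d ih =>
    intro x y h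
    have hne : x ≠ y := by
      intro he; rw [he, hammingDist_self] at h; omega
    have hex : ∃ i, x i ≠ y i := by
      by_contra hcon; push_neg at hcon; exact hne (funext hcon)
    obtain ⟨i, hi⟩ := hex
    set z := Function.update x i (y i) with hz
    have key : (Finset.univ.filter fun j => z j ≠ y j)
        = (Finset.univ.filter fun j => x j ≠ y j).erase i := by
      ext j
      rcases eq_or_ne j i with rfl | hj
      · simp [hz]
      · simp [hz, Function.update_of_ne hj, hj]
    have hzy : hammingDist z y = d := by
      have h1 : hammingDist z y = ((Finset.univ.filter fun j => x j ≠ y j).erase i).card := by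
        show (Finset.univ.filter fun j => z j ≠ y j).card = _
        rw [key]
      have h2 : i ∈ (Finset.univ.filter fun j => x j ≠ y j) := by simp [hi]
      have h3 : (Finset.univ.filter fun j => x j ≠ y j).card = d + 1 := h
      rw [h1, Finset.card_erase_of_mem h2, h3]; omega
    have hxz : hammingDist x z ≤ 1 := by
      have hsub : (Finset.univ.filter fun j => x j ≠ z j) ⊆ {i} := by
        intro j hj
        simp only [Finset.mem_filter, Finset.mem_univ, true_and] at hj
        simp only [Finset.mem_singleton]
        by_contra hji
        exact hj (by simp [hz, Function.update_of_ne hji])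
      calc hammingDist x z ≤ ({i} : Finset (Fin n)).card := Finset.card_le_card hsub
      _ = 1 := Finset.card_singleton i
    calc M x T ≤ M z T + a := hstep x z hxz
    _ ≤ (M y T + d * a) + a := add_le_add_left (ih z y hzy) a
    _ = M y T + (d + 1 : ℕ) * a := by push_cast; ring

/-! ### One-step bounds from the privacy conditions -/

lemma dp_step {n : ℕ} {M : Kernel (Fin n → Bool) ℝ} [IsMarkovKernel M] {ε : ℝ} (hε : 0 ≤ ε)
    (hdp : IsDP M ε 0) (T : Set ℝ) (hT : MeasurableSet T) :
    ∀ x y : Fin n → Bool, hammingDist x y ≤ 1 →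
      M x T ≤ M y T + ENNReal.ofReal (1 - Real.exp (-ε)) := by
  intro x y hxy
  have h := hdp x y hxy T hT
  rw [ENNReal.ofReal_zero, add_zero] at h
  have hexpneg : Real.exp (-ε) ≤ 1 := by
    rw [← Real.exp_zero]; exact Real.exp_le_exp.mpr (by linarith)
  by_cases hb : ENNReal.ofReal (Real.exp (-ε)) ≤ M y T
  · calc M x T ≤ 1 := prob_le_one
    _ = ENNReal.ofReal (Real.exp (-ε)) + ENNReal.ofReal (1 - Real.exp (-ε)) := by
        rw [← ENNReal.ofReal_add (Real.exp_pos _).le (by linarith)]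
        norm_num
    _ ≤ M y T + ENNReal.ofReal (1 - Real.exp (-ε)) := add_le_add_left hb _
  · push_neg at hb
    have hyfin : M y T ≠ ⊤ := measure_ne_top _ _
    have hb1 : M y T = ENNReal.ofReal (M y T).toReal := (ENNReal.ofReal_toReal hyfin).symm
    set b := (M y T).toReal with hbdef
    have hble : b ≤ Real.exp (-ε) := by
      rw [hb1] at hb
      exact le_of_lt ((ENNReal.ofReal_lt_ofReal_iff (Real.exp_pos _)).mp hb)
    have hbnn : 0 ≤ b := ENNReal.toReal_nonneg
    have hmul : Real.exp ε * Real.exp (-ε) = 1 := by rw [← Real.exp_add]; simp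
    calc M x T ≤ ENNReal.ofReal (Real.exp ε) * M y T := h
    _ = ENNReal.ofReal (Real.exp ε * b) := by rw [hb1, ← ENNReal.ofReal_mul (Real.exp_pos _).le]
    _ ≤ ENNReal.ofReal (b + (1 - Real.exp (-ε))) := by
        apply ENNReal.ofReal_le_ofReal
        nlinarith [mul_nonneg (sub_nonneg.mpr (Real.one_le_exp hε)) (sub_nonneg.mpr hble)]
    _ = M y T + ENNReal.ofReal (1 - Real.exp (-ε)) := by
        rw [ENNReal.ofReal_add hbnn (by linarith), ← hb1]

lemma cs_piece {α : Type*} [MeasurableSpace α] (μ : Measure α) (f : α → ℝ≥0∞)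
    (hf : Measurable f) :
    (∫⁻ t, f t ∂μ)^2 ≤ (∫⁻ t, (f t)^(2:ℝ) ∂μ) * μ Set.univ := by
  have hpq : Real.HolderConjugate 2 2 := Real.HolderConjugate.two_two
  have h := ENNReal.lintegral_mul_le_Lp_mul_Lq μ hpq hf.aemeasurable
    (aemeasurable_const (b := (1:ℝ≥0∞)))
  simp only [mul_one, ENNReal.one_rpow, lintegral_one, Pi.mul_apply, Pi.one_apply] at h
  have hsq : ∀ x : ℝ≥0∞, (x ^ (1/2:ℝ))^2 = x := by
    intro x
    rw [← ENNReal.rpow_natCast (x ^ (1/2:ℝ)) 2, ← ENNReal.rpow_mul]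
    norm_num
  calc (∫⁻ t, f t ∂μ)^2
      ≤ ((∫⁻ t, (f t)^(2:ℝ) ∂μ) ^ (1/2:ℝ) * (μ Set.univ) ^ (1/2:ℝ))^2 := by
        rw [sq, sq]; exact mul_le_mul' h h
  _ = (∫⁻ t, (f t)^(2:ℝ) ∂μ) * μ Set.univ := by rw [mul_pow, hsq, hsq]

lemma zcdp_bound {P Q : Measure ℝ} [IsProbabilityMeasure P] [IsProbabilityMeasure Q] {ρ : ℝ}
    (hρ : 0 < ρ) (h2 : renyiDiv 2 P Q ≤ ENNReal.ofReal (ρ * 2)) (T : Set ℝ)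
    (hT : MeasurableSet T) : P T ≤ Q T + ENNReal.ofReal (Real.sqrt ρ) := by
  rw [renyiDiv] at h2
  split_ifs at h2 with hcond
  · obtain ⟨hac, hfin⟩ := hcond
    set f := P.rnDeriv Q with hf
    have hfm : Measurable f := Measure.measurable_rnDeriv P Q
    set I := ∫⁻ t, (f t) ^ (2:ℝ) ∂Q with hI
    have hlog : Real.log I.toReal ≤ ρ * 2 := by
      have h3 := (ENNReal.ofReal_le_ofReal_iff (by linarith)).mp h2
      norm_num at h3
      linarith
    have hrest : ∀ s : Set ℝ, (P s)^2 ≤ (∫⁻ t in s, (f t)^(2:ℝ) ∂Q) * Q s := by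
      intro s
      have h4 := cs_piece (Q.restrict s) f hfm
      rw [Measure.restrict_apply_univ] at h4
      have h5 : ∫⁻ t in s, f t ∂Q = P s := Measure.setLIntegral_rnDeriv hac s
      rwa [h5] at h4
    have hT2 := hrest T
    have hTc2 := hrest Tᶜ
    have hsplit : (∫⁻ t in T, (f t)^(2:ℝ) ∂Q) + (∫⁻ t in Tᶜ, (f t)^(2:ℝ) ∂Q) = I :=
      lintegral_add_compl _ hT
    have hJT : (∫⁻ t in T, (f t)^(2:ℝ) ∂Q) ≠ ⊤ :=
      ne_top_of_le_ne_top hfin (setLIntegral_le_lintegral _ _)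
    have hJTc : (∫⁻ t in Tᶜ, (f t)^(2:ℝ) ∂Q) ≠ ⊤ :=
      ne_top_of_le_ne_top hfin (setLIntegral_le_lintegral _ _)
    have hI1 : (1:ℝ≥0∞) ≤ I := by
      have h5 := hrest Set.univ
      rw [hI]
      simpa using h5
    set pa := (P T).toReal with hpa
    set pc := (P Tᶜ).toReal with hpc
    set qb := (Q T).toReal with hqb
    set qc := (Q Tᶜ).toReal with hqc
    set jt := (∫⁻ t in T, (f t)^(2:ℝ) ∂Q).toReal with hjt
    set jtc := (∫⁻ t in Tᶜ, (f t)^(2:ℝ) ∂Q).toReal with hjtc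
    set itr := I.toReal with hitr
    have hpa2 : pa^2 ≤ jt * qb := by
      have := ENNReal.toReal_mono (by finiteness) hT2
      rwa [ENNReal.toReal_pow, ENNReal.toReal_mul] at this
    have hpc2 : pc^2 ≤ jtc * qc := by
      have := ENNReal.toReal_mono (by finiteness) hTc2
      rwa [ENNReal.toReal_pow, ENNReal.toReal_mul] at this
    have hjsum : jt + jtc = itr := by
      rw [hjt, hjtc, hitr, ← ENNReal.toReal_add hJT hJTc, hsplit]
    have hpsum : pa + pc = 1 := by
      rw [hpa, hpc, ← ENNReal.toReal_add (measure_ne_top _ _) (measure_ne_top _ _),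
        prob_add_prob_compl hT, ENNReal.toReal_one]
    have hqsum : qb + qc = 1 := by
      rw [hqb, hqc, ← ENNReal.toReal_add (measure_ne_top _ _) (measure_ne_top _ _),
        prob_add_prob_compl hT, ENNReal.toReal_one]
    have hitr1 : 1 ≤ itr := by
      have := ENNReal.toReal_mono hfin hI1
      simpa using this
    have hitr2 : itr ≤ Real.exp (2*ρ) := by
      calc itr = Real.exp (Real.log itr) := (Real.exp_log (by linarith)).symm
      _ ≤ Real.exp (2*ρ) := Real.exp_le_exp.mpr (by linarith)
    have hpa0 : 0 ≤ pa := ENNReal.toReal_nonneg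
    have hpc0 : 0 ≤ pc := ENNReal.toReal_nonneg
    have hqb0 : 0 ≤ qb := ENNReal.toReal_nonneg
    have hqc0 : 0 ≤ qc := ENNReal.toReal_nonneg
    have hjt0 : 0 ≤ jt := ENNReal.toReal_nonneg
    have hjtc0 : 0 ≤ jtc := ENNReal.toReal_nonneg
    have hqc' : qc = 1 - qb := by linarith
    have hpc' : pc = 1 - pa := by linarith
    rw [hqc'] at hpc2
    rw [hpc'] at hpc2
    have hj3 : (jt + jtc)*(qb*(1-qb)) = itr*(qb*(1-qb)) := by rw [hjsum]
    have hkey : (pa - qb)^2 ≤ qb*(1-qb)*(Real.exp (2*ρ) - 1) := by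
      nlinarith [mul_le_mul_of_nonneg_right hpa2 (show (0:ℝ) ≤ 1-qb by linarith),
        mul_le_mul_of_nonneg_right hpc2 hqb0,
        mul_le_mul_of_nonneg_right hitr2 (mul_nonneg hqb0 (show (0:ℝ) ≤ 1-qb by linarith)), hj3]
    have hfinal : pa ≤ qb + Real.sqrt ρ := by
      have := abs_diff_le_sqrt hρ hpa0 (by linarith) hqb0 (by linarith) hkey
      linarith
    calc P T = ENNReal.ofReal pa := (ENNReal.ofReal_toReal (measure_ne_top _ _)).symm
    _ ≤ ENNReal.ofReal (qb + Real.sqrt ρ) := ENNReal.ofReal_le_ofReal hfinal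
    _ = ENNReal.ofReal qb + ENNReal.ofReal (Real.sqrt ρ) :=
        ENNReal.ofReal_add hqb0 (Real.sqrt_nonneg _)
    _ = Q T + ENNReal.ofReal (Real.sqrt ρ) := by
        rw [hqb, ENNReal.ofReal_toReal (measure_ne_top _ _)]
  · exact absurd (top_le_iff.mp h2) ENNReal.ofReal_ne_top

/-! ### The master two-point lower bound -/

lemma master {n : ℕ} (M : Kernel (Fin n → Bool) ℝ) [IsMarkovKernel M] {a δ : ℝ}
    (ha : 0 ≤ a) (hδ0 : 0 < δ) (hδ1 : δ < 1/2)
    (hpen : 2 * (n:ℝ) * δ * a ≤ 2/3)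
    (hstep : ∀ T : Set ℝ, MeasurableSet T → ∀ x y : Fin n → Bool,
      hammingDist x y ≤ 1 → M x T ≤ M y T + ENNReal.ofReal a) :
    ENNReal.ofReal (δ^2 / 6) ≤ ⨆ θ ∈ Set.Ioo (0:ℝ) 1,
      ∫⁻ x, ∫⁻ t, ENNReal.ofReal (|t - θ| ^ 2) ∂(M x)
        ∂(Measure.pi fun _ : Fin n => bern θ) := by
  set θ₀ : ℝ := 1/2 - δ with hθ₀def
  set θ₁ : ℝ := 1/2 + δ with hθ₁def
  have hθ₀m : θ₀ ∈ Set.Ioo (0:ℝ) 1 := ⟨by rw [hθ₀def]; linarith, by rw [hθ₀def]; linarith⟩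
  have hθ₁m : θ₁ ∈ Set.Ioo (0:ℝ) 1 := ⟨by rw [hθ₁def]; linarith, by rw [hθ₁def]; linarith⟩
  haveI hb0 : IsProbabilityMeasure (bern θ₀) := bern_prob (by rw [hθ₀def]; linarith) (by rw [hθ₀def]; linarith)
  haveI hb1 : IsProbabilityMeasure (bern θ₁) := bern_prob (by rw [hθ₁def]; linarith) (by rw [hθ₁def]; linarith)
  haveI hcp : IsProbabilityMeasure (cpl θ₀ θ₁) :=
    cpl_prob (by rw [hθ₀def]; linarith) (by rw [hθ₀def, hθ₁def]; linarith) (by rw [hθ₁def]; linarith)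
  set S : Set ℝ := Set.Iic (1/2 : ℝ) with hSdef
  have hS : MeasurableSet S := measurableSet_Iic
  set P₀ : Measure (Fin n → Bool) := Measure.pi (fun _ => bern θ₀) with hP₀
  set P₁ : Measure (Fin n → Bool) := Measure.pi (fun _ => bern θ₁) with hP₁
  set cm : Measure (Fin n → Bool × Bool) := Measure.pi (fun _ => cpl θ₀ θ₁) with hcm0
  haveI : IsProbabilityMeasure cm := by rw [hcm0]; infer_instance
  have hXmp : MeasurePreserving (fun ω : Fin n → Bool × Bool => fun i => (ω i).1) cm P₀ := by
    rw [hcm0, hP₀]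
    exact measurePreserving_pi _ _ (fun i => ⟨measurable_fst,
      cpl_map_fst (by rw [hθ₀def]; linarith) (by rw [hθ₀def, hθ₁def]; linarith) (by rw [hθ₁def]; linarith)⟩)
  have hYmp : MeasurePreserving (fun ω : Fin n → Bool × Bool => fun i => (ω i).2) cm P₁ := by
    rw [hcm0, hP₁]
    exact measurePreserving_pi _ _ (fun i => ⟨measurable_snd,
      cpl_map_snd (by rw [hθ₀def]; linarith) (by rw [hθ₀def, hθ₁def]; linarith) (by rw [hθ₁def]; linarith)⟩)
  set A : ℝ≥0∞ := ∫⁻ x, M x Sᶜ ∂P₀ with hA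
  set B : ℝ≥0∞ := ∫⁻ x, M x S ∂P₁ with hB
  have hpath := path_bound M Sᶜ (ENNReal.ofReal a) (hstep Sᶜ hS.compl)
  have hpoint : ∀ ω : Fin n → Bool × Bool,
      (1:ℝ≥0∞) ≤ M (fun i => (ω i).1) Sᶜ + M (fun i => (ω i).2) S
        + (hammingDist (fun i => (ω i).1) (fun i => (ω i).2) : ℝ≥0∞) * ENNReal.ofReal a := by
    intro ω
    have h2 := hpath (hammingDist (fun i => (ω i).2) (fun i => (ω i).1))
      (fun i => (ω i).2) (fun i => (ω i).1) rfl
    rw [hammingDist_comm] at h2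
    have h3 : M (fun i => (ω i).2) S + M (fun i => (ω i).2) Sᶜ = 1 := prob_add_prob_compl hS
    calc (1:ℝ≥0∞) = M (fun i => (ω i).2) S + M (fun i => (ω i).2) Sᶜ := h3.symm
    _ ≤ M (fun i => (ω i).2) S + (M (fun i => (ω i).1) Sᶜ
        + (hammingDist (fun i => (ω i).1) (fun i => (ω i).2) : ℝ≥0∞) * ENNReal.ofReal a) :=
      add_le_add_right h2 _
    _ = M (fun i => (ω i).1) Sᶜ + M (fun i => (ω i).2) S
        + (hammingDist (fun i => (ω i).1) (fun i => (ω i).2) : ℝ≥0∞) * ENNReal.ofReal a := by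
      ring
  have hEH : ∫⁻ ω, (hammingDist (fun i => (ω i).1) (fun i => (ω i).2) : ℝ≥0∞) ∂cm
      = n * ENNReal.ofReal (2*δ) := by
    have hcard : ∀ ω : Fin n → Bool × Bool,
        (hammingDist (fun i => (ω i).1) (fun i => (ω i).2) : ℝ≥0∞)
        = ∑ i : Fin n, Set.indicator ((fun ω' : Fin n → Bool × Bool => ω' i) ⁻¹'
            {p : Bool × Bool | p.1 ≠ p.2}) (fun _ => (1:ℝ≥0∞)) ω := by
      intro ω
      have h1 : hammingDist (fun i => (ω i).1) (fun i => (ω i).2)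
          = (Finset.univ.filter fun i : Fin n => (ω i).1 ≠ (ω i).2).card := rfl
      rw [h1, Finset.card_filter]
      push_cast
      apply Finset.sum_congr rfl
      intro i _
      simp [Set.indicator_apply, Set.mem_preimage, Set.mem_setOf_eq]
    rw [lintegral_congr hcard, lintegral_finset_sum _ (fun i _ => Measurable.of_discrete)]
    have hone : ∀ i : Fin n,
        ∫⁻ ω, Set.indicator ((fun ω' : Fin n → Bool × Bool => ω' i) ⁻¹'
          {p : Bool × Bool | p.1 ≠ p.2}) (fun _ => (1:ℝ≥0∞)) ω ∂cm
        = ENNReal.ofReal (2*δ) := by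
      intro i
      rw [lintegral_indicator MeasurableSet.of_discrete]
      rw [setLIntegral_const, one_mul]
      have hpre : (fun ω' : Fin n → Bool × Bool => ω' i) ⁻¹' {p : Bool × Bool | p.1 ≠ p.2}
          = Set.pi Set.univ (fun j => if j = i then {p : Bool × Bool | p.1 ≠ p.2} else Set.univ) := by
        ext ω
        simp only [Set.mem_preimage, Set.mem_pi, Set.mem_univ, true_implies, Set.mem_setOf_eq]
        constructor
        · intro h j
          by_cases hj : j = i
          · subst hj; simpa using h
          · simp [hj]
        · intro h
          have := h i
          simpa using this
      rw [hpre, hcm0, Measure.pi_pi]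
      have hfac : ∀ j : Fin n, cpl θ₀ θ₁ (if j = i then {p : Bool × Bool | p.1 ≠ p.2} else Set.univ)
          = if j = i then cpl θ₀ θ₁ {p : Bool × Bool | p.1 ≠ p.2} else 1 := by
        intro j; split_ifs
        · rfl
        · exact measure_univ
      rw [Finset.prod_congr rfl (fun j _ => hfac j),
        Finset.prod_ite_eq' Finset.univ i (fun _ => cpl θ₀ θ₁ {p : Bool × Bool | p.1 ≠ p.2})]
      simp only [Finset.mem_univ, if_true]
      rw [cpl_ne]
      congr 1
      rw [hθ₀def, hθ₁def]; ring
    rw [Finset.sum_congr rfl (fun i _ => hone i), Finset.sum_const, Finset.card_univ,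
      Fintype.card_fin, nsmul_eq_mul]
  have hABbound : (1:ℝ≥0∞) ≤ A + B + (n * ENNReal.ofReal (2*δ)) * ENNReal.ofReal a := by
    calc (1:ℝ≥0∞) = ∫⁻ _, 1 ∂cm := by rw [lintegral_one, measure_univ]
    _ ≤ ∫⁻ ω, (M (fun i => (ω i).1) Sᶜ + M (fun i => (ω i).2) S
        + (hammingDist (fun i => (ω i).1) (fun i => (ω i).2) : ℝ≥0∞) * ENNReal.ofReal a) ∂cm :=
      lintegral_mono hpoint
    _ = (∫⁻ ω, M (fun i => (ω i).1) Sᶜ ∂cm) + (∫⁻ ω, M (fun i => (ω i).2) S ∂cm)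
        + (∫⁻ ω, (hammingDist (fun i => (ω i).1) (fun i => (ω i).2) : ℝ≥0∞) ∂cm)
          * ENNReal.ofReal a := by
      rw [lintegral_add_right _ Measurable.of_discrete, lintegral_add_right _ Measurable.of_discrete,
        lintegral_mul_const _ Measurable.of_discrete]
    _ = A + B + (n * ENNReal.ofReal (2*δ)) * ENNReal.ofReal a := by
      rw [hEH, hXmp.lintegral_comp (M.measurable_coe hS.compl),
        hYmp.lintegral_comp (M.measurable_coe hS)]
  have hAB : ENNReal.ofReal (1/3) ≤ A + B := by
    have hpen2 : (n * ENNReal.ofReal (2*δ)) * ENNReal.ofReal a ≤ ENNReal.ofReal (2/3) := by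
      have he : ((n:ℝ≥0∞) * ENNReal.ofReal (2*δ)) * ENNReal.ofReal a
          = ENNReal.ofReal ((n:ℝ) * (2*δ) * a) := by
        rw [← ENNReal.ofReal_natCast n, ← ENNReal.ofReal_mul (by positivity),
          ← ENNReal.ofReal_mul (by positivity)]
      rw [he]
      apply ENNReal.ofReal_le_ofReal
      nlinarith
    have h13 : (1:ℝ≥0∞) = ENNReal.ofReal (1/3) + ENNReal.ofReal (2/3) := by
      rw [← ENNReal.ofReal_add (by norm_num) (by norm_num)]; norm_num
    have h6 : ENNReal.ofReal (1/3) + ENNReal.ofReal (2/3) ≤ (A + B) + ENNReal.ofReal (2/3) := by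
      rw [← h13]
      exact hABbound.trans (add_le_add_right hpen2 _)
    exact (ENNReal.add_le_add_iff_right ENNReal.ofReal_ne_top).mp h6
  have hr0 : ENNReal.ofReal (δ^2) * A ≤ ∫⁻ x, ∫⁻ t, ENNReal.ofReal (|t - θ₀| ^ 2) ∂(M x) ∂P₀ := by
    rw [hA, ← lintegral_const_mul _ (M.measurable_coe hS.compl)]
    apply lintegral_mono
    intro x
    show ENNReal.ofReal (δ^2) * M x Sᶜ ≤ ∫⁻ t, ENNReal.ofReal (|t - θ₀| ^ 2) ∂(M x)
    have hin : ENNReal.ofReal (δ^2) * M x Sᶜ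
        = ∫⁻ t, Set.indicator Sᶜ (fun _ => ENNReal.ofReal (δ^2)) t ∂(M x) := by
      rw [lintegral_indicator hS.compl, setLIntegral_const]
    rw [hin]
    apply lintegral_mono
    intro t
    by_cases ht : t ∈ Sᶜ
    · rw [Set.indicator_of_mem ht]
      apply ENNReal.ofReal_le_ofReal
      have ht' : (1:ℝ)/2 < t := by
        simpa [hSdef, Set.mem_Iic, not_le] using ht
      have hd : δ ≤ |t - θ₀| := by
        calc δ ≤ t - θ₀ := by rw [hθ₀def]; linarith
        _ ≤ |t - θ₀| := le_abs_self _
      calc δ^2 ≤ |t - θ₀|^2 := pow_le_pow_left₀ hδ0.le hd 2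
      _ = |t - θ₀|^2 := rfl
    · rw [Set.indicator_of_notMem ht]; exact zero_le
  have hr1 : ENNReal.ofReal (δ^2) * B ≤ ∫⁻ x, ∫⁻ t, ENNReal.ofReal (|t - θ₁| ^ 2) ∂(M x) ∂P₁ := by
    rw [hB, ← lintegral_const_mul _ (M.measurable_coe hS)]
    apply lintegral_mono
    intro x
    show ENNReal.ofReal (δ^2) * M x S ≤ ∫⁻ t, ENNReal.ofReal (|t - θ₁| ^ 2) ∂(M x)
    have hin : ENNReal.ofReal (δ^2) * M x S
        = ∫⁻ t, Set.indicator S (fun _ => ENNReal.ofReal (δ^2)) t ∂(M x) := by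
      rw [lintegral_indicator hS, setLIntegral_const]
    rw [hin]
    apply lintegral_mono
    intro t
    by_cases ht : t ∈ S
    · rw [Set.indicator_of_mem ht]
      apply ENNReal.ofReal_le_ofReal
      have ht' : t ≤ (1:ℝ)/2 := by simpa [hSdef, Set.mem_Iic] using ht
      have hd : δ ≤ |t - θ₁| := by
        calc δ ≤ θ₁ - t := by rw [hθ₁def]; linarith
        _ ≤ |θ₁ - t| := le_abs_self _
        _ = |t - θ₁| := abs_sub_comm _ _
      exact pow_le_pow_left₀ hδ0.le hd 2
    · rw [Set.indicator_of_notMem ht]; exact zero_le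
  have hsup0 : (∫⁻ x, ∫⁻ t, ENNReal.ofReal (|t - θ₀| ^ 2) ∂(M x) ∂P₀)
      ≤ ⨆ θ ∈ Set.Ioo (0:ℝ) 1, ∫⁻ x, ∫⁻ t, ENNReal.ofReal (|t - θ| ^ 2) ∂(M x)
          ∂(Measure.pi fun _ : Fin n => bern θ) := by
    rw [hP₀]
    exact le_biSup (f := fun θ : ℝ => ∫⁻ x, ∫⁻ t, ENNReal.ofReal (|t - θ| ^ 2) ∂(M x)
      ∂(Measure.pi fun _ : Fin n => bern θ)) hθ₀m
  have hsup1 : (∫⁻ x, ∫⁻ t, ENNReal.ofReal (|t - θ₁| ^ 2) ∂(M x) ∂P₁)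
      ≤ ⨆ θ ∈ Set.Ioo (0:ℝ) 1, ∫⁻ x, ∫⁻ t, ENNReal.ofReal (|t - θ| ^ 2) ∂(M x)
          ∂(Measure.pi fun _ : Fin n => bern θ) := by
    rw [hP₁]
    exact le_biSup (f := fun θ : ℝ => ∫⁻ x, ∫⁻ t, ENNReal.ofReal (|t - θ| ^ 2) ∂(M x)
      ∂(Measure.pi fun _ : Fin n => bern θ)) hθ₁m
  set SUP := ⨆ θ ∈ Set.Ioo (0:ℝ) 1, ∫⁻ x, ∫⁻ t, ENNReal.ofReal (|t - θ| ^ 2) ∂(M x)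
      ∂(Measure.pi fun _ : Fin n => bern θ) with hSUP
  calc ENNReal.ofReal (δ^2/6) = ENNReal.ofReal (δ^2) * ENNReal.ofReal (1/3) / 2 := by
        rw [← ENNReal.ofReal_mul (by positivity), show δ^2 * (1/3) = δ^2/3 by ring]
        rw [show (δ^2/6 : ℝ) = (δ^2/3)/2 by ring, ENNReal.ofReal_div_of_pos (by norm_num)]
        norm_num
  _ ≤ ENNReal.ofReal (δ^2) * (A + B) / 2 := by gcongr
  _ = (ENNReal.ofReal (δ^2) * A + ENNReal.ofReal (δ^2) * B) / 2 := by rw [mul_add]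
  _ ≤ (SUP + SUP) / 2 := by
      gcongr
      · exact hr0.trans hsup0
      · exact hr1.trans hsup1
  _ = SUP := by
      rw [← two_mul, mul_comm, mul_div_assoc, ENNReal.div_self (by norm_num) (by norm_num),
        mul_one]

/-! ### The main theorem -/

/-- **Private minimax lower bounds for the Bernoulli model**:
(i) if `n ε ≥ 2` then the minimax risk over `ε`-DP mechanisms is at least
`(1/32) e^{-1/√2} / (nε)²`, and in particular at least `(1/80) / (nε)²`;
(ii) if `n √ρ ≥ 2` then the minimax risk over `ρ`-zCDP mechanisms is at least
`(1/64) / (n² ρ)`. -/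
theorem bernoulli_private_minimax_lb (n : ℕ) :
    (∀ ε : ℝ, 0 < ε → 2 ≤ n * ε →
      ENNReal.ofReal (1 / 32 * Real.exp (-(1 / Real.sqrt 2)) / (n * ε) ^ 2)
          ≤ bernPrivMinimax n (fun M => IsDP M ε 0) ∧
      ENNReal.ofReal (1 / 80 / (n * ε) ^ 2)
          ≤ bernPrivMinimax n (fun M => IsDP M ε 0)) ∧
    (∀ ρ : ℝ, 0 < ρ → 2 ≤ n * Real.sqrt ρ →
      ENNReal.ofReal (1 / 64 / ((n : ℝ) ^ 2 * ρ))
          ≤ bernPrivMinimax n (fun M => IsZCDP M ρ)) := by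
  constructor
  · intro ε hε hnε
    have hn : (0:ℝ) < n := by
      rcases Nat.eq_zero_or_pos n with h | h
      · exfalso; rw [h] at hnε; push_cast at hnε; linarith
      · exact_mod_cast h
    have hnε0 : (0:ℝ) < n*ε := by positivity
    set δ : ℝ := 1/(3*((n:ℝ)*ε)) with hδdef
    have hδ0 : 0 < δ := by rw [hδdef]; positivity
    have hδ1 : δ < 1/2 := by
      rw [hδdef]
      have h6 : (6:ℝ) ≤ 3*((n:ℝ)*ε) := by linarith
      calc 1/(3*((n:ℝ)*ε)) ≤ 1/6 := by
            apply one_div_le_one_div_of_le (by norm_num) h6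
      _ < 1/2 := by norm_num
    have key : ENNReal.ofReal (δ^2/6) ≤ bernPrivMinimax n (fun M => IsDP M ε 0) := by
      rw [bernPrivMinimax]
      refine le_iInf₂ fun M hM => ?_
      obtain ⟨hMk, hDP, -⟩ := hM
      haveI := hMk
      refine master M (a := 1 - Real.exp (-ε)) ?_ hδ0 hδ1 ?_ ?_
      · have : Real.exp (-ε) ≤ 1 := by
          rw [← Real.exp_zero]; exact Real.exp_le_exp.mpr (by linarith)
        linarith
      · have h1 : 1 - Real.exp (-ε) ≤ ε := by
          have := Real.add_one_le_exp (-ε); linarith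
        have h2 : 2*(n:ℝ)*δ*(1 - Real.exp (-ε)) ≤ 2*(n:ℝ)*δ*ε := by
          apply mul_le_mul_of_nonneg_left h1 (by positivity)
        have h3 : 2*(n:ℝ)*δ*ε = 2/3 := by
          rw [hδdef]; field_simp
        linarith
      · intro T hT x y hxy
        exact dp_step hε.le hDP T hT x y hxy
    have hsq : δ^2/6 = (1/54) / ((n:ℝ)*ε)^2 := by
      rw [hδdef]; field_simp; ring
    constructor
    · refine le_trans (ENNReal.ofReal_le_ofReal ?_) key
      rw [hsq]
      have hs2 : Real.sqrt 2 ≤ 1.43 := by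
        rw [show (1.43:ℝ) = Real.sqrt (1.43^2) from (Real.sqrt_sq (by norm_num)).symm]
        exact Real.sqrt_le_sqrt (by norm_num)
      have hs2' : (0:ℝ) < Real.sqrt 2 := Real.sqrt_pos.mpr (by norm_num)
      have h3 : (0.69:ℝ) ≤ 1/Real.sqrt 2 := by
        rw [le_div_iff₀ hs2']
        nlinarith
      have h4 : Real.exp (-(1/Real.sqrt 2)) ≤ Real.exp (-(0.69:ℝ)) :=
        Real.exp_le_exp.mpr (by linarith)
      have h5 : Real.exp (-(0.69:ℝ)) ≤ 16/27 := by
        have h6 : (1.69:ℝ) ≤ Real.exp (0.69:ℝ) := by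
          have := Real.add_one_le_exp (0.69:ℝ); linarith
        rw [Real.exp_neg]
        calc (Real.exp (0.69:ℝ))⁻¹ ≤ (1.69:ℝ)⁻¹ := by
              apply inv_anti₀ (by norm_num) h6
        _ ≤ 16/27 := by norm_num
      have hE : Real.exp (-(1/Real.sqrt 2)) ≤ 16/27 := le_trans h4 h5
      have hpos : (0:ℝ) < ((n:ℝ)*ε)^2 := by positivity
      rw [div_le_div_iff₀ hpos hpos]
      have hEpos : 0 < Real.exp (-(1/Real.sqrt 2)) := Real.exp_pos _
      nlinarith [sq_nonneg ((n:ℝ)*ε)]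
    · refine le_trans (ENNReal.ofReal_le_ofReal ?_) key
      rw [hsq]
      have hpos : (0:ℝ) < ((n:ℝ)*ε)^2 := by positivity
      rw [div_le_div_iff₀ hpos hpos]
      nlinarith [sq_nonneg ((n:ℝ)*ε)]
  · intro ρ hρ hnρ
    have hsρ : (0:ℝ) < Real.sqrt ρ := Real.sqrt_pos.mpr hρ
    have hn : (0:ℝ) < n := by
      rcases Nat.eq_zero_or_pos n with h | h
      · exfalso; rw [h] at hnρ; push_cast at hnρ; linarith
      · exact_mod_cast h
    have hnρ0 : (0:ℝ) < n*Real.sqrt ρ := by positivity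
    set δ : ℝ := 1/(3*((n:ℝ)*Real.sqrt ρ)) with hδdef
    have hδ0 : 0 < δ := by rw [hδdef]; positivity
    have hδ1 : δ < 1/2 := by
      rw [hδdef]
      have h6 : (6:ℝ) ≤ 3*((n:ℝ)*Real.sqrt ρ) := by linarith
      calc 1/(3*((n:ℝ)*Real.sqrt ρ)) ≤ 1/6 := by
            apply one_div_le_one_div_of_le (by norm_num) h6
      _ < 1/2 := by norm_num
    have key : ENNReal.ofReal (δ^2/6) ≤ bernPrivMinimax n (fun M => IsZCDP M ρ) := by
      rw [bernPrivMinimax]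
      refine le_iInf₂ fun M hM => ?_
      obtain ⟨hMk, hZ, -⟩ := hM
      haveI := hMk
      refine master M (Real.sqrt_nonneg ρ) hδ0 hδ1 ?_ ?_
      · have h3 : 2*(n:ℝ)*δ*Real.sqrt ρ = 2/3 := by
          rw [hδdef]; field_simp
        linarith
      · intro T hT x y hxy
        exact zcdp_bound hρ (hZ x y hxy 2 one_lt_two) T hT
    refine le_trans (ENNReal.ofReal_le_ofReal ?_) key
    have hsq : δ^2/6 = (1/54) / ((n:ℝ)^2*ρ) := by
      rw [hδdef]
      have : ((n:ℝ)*Real.sqrt ρ)^2 = (n:ℝ)^2*ρ := by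
        rw [mul_pow, Real.sq_sqrt hρ.le]
      field_simp
      nlinarith [Real.sq_sqrt hρ.le]
    rw [hsq]
    have hpos : (0:ℝ) < (n:ℝ)^2*ρ := by positivity
    rw [div_le_div_iff₀ hpos hpos]
    nlinarith
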